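/- Let α ∈ (0,1), n ≥ 2, and define the local-nonlocal splitting kernels: â₀^{(n)} := ((1−α)/(2−α))a₀^{(n)} + η₁^{(n)}/(r_n(1+r_n)), â_{n−1}^{(n)} := a_{n−1}^{(n)} − η_{n−1}^{(n)}/(1+r₂), and A₀^{(n)} := 2â₀^{(n)}, A_{n−k}^{(n)} := â_{n−k}^{(n)} := a_{n−k}^{(n)} − η_{n−k}^{(n)}/(1+r_{k+1}) + η_{n−k+1}^{(n)}/(r_k(1+r_k)) for 2 ≤ k ≤ n−1. Then A_{n−k}^{(n)} ≥ a_{n−k}^{(n)} − η_{n−k}^{(n)}/(1+r_{k+1}) = ∫_{t_{k−1}}^{t_k} ((t_{k+1}+t_k−2s)/((1+r_{k+1})τ_k²)) ω_{1−α}(t_n−s) ds > 0 for 1 ≤ k ≤ n−1. -/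

import Mathlib

/-- ω_β(t) := t^{β−1}/Γ(β) -/
noncomputable def omegaK (β t : ℝ) : ℝ := t ^ (β - 1) / Real.Gamma β

/-- a_{n−k}^{(n)} over the interval [t_{k−1}, t_k]. -/
noncomputable def aF (α : ℝ) (t : ℕ → ℝ) (n k : ℕ) : ℝ :=
  (1 / (t k - t (k-1))) * ∫ s in (t (k-1))..(t k), omegaK (1 - α) (t n - s)

/-- η_{n−k}^{(n)} over the interval [t_{k−1}, t_k]. -/
noncomputable def etaI (α : ℝ) (t : ℕ → ℝ) (n k : ℕ) : ℝ :=
  (2 / (t k - t (k-1))) *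
    ∫ s in (t (k-1))..(t k),
      ((s - (t k + t (k-1))/2) / (t k - t (k-1))) * omegaK (1 - α) (t n - s)

/-- step ratio r_j := τ_j/τ_{j−1} -/
noncomputable def ratio (t : ℕ → ℝ) (j : ℕ) : ℝ :=
  (t j - t (j-1)) / (t (j-1) - t (j-2))

/-- the kernel A_{n−k}^{(n)} of the local–nonlocal splitting
(A_{n−1}^{(n)} has no last term; note r₂ = r_{k+1} for k = 1). -/
noncomputable def Aker (α : ℝ) (t : ℕ → ℝ) (n k : ℕ) : ℝ :=
  aF α t n k - etaI α t n k / (1 + ratio t (k+1))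
    + (if k = 1 then 0 else etaI α t n (k-1) / (ratio t k * (1 + ratio t k)))

lemma omegaK_continuousOn (α T a b : ℝ) (hb : b < T) :
    ContinuousOn (fun s => omegaK (1 - α) (T - s)) (Set.Icc a b) := by
  intro s hs
  have h0 : T - s ≠ 0 := by have := hs.2; nlinarith [hs.2]
  unfold omegaK
  apply ContinuousWithinAt.div_const
  exact (((Real.continuousAt_rpow_const _ _ (Or.inl h0)).comp
    ((continuous_const.sub continuous_id).continuousAt)).continuousWithinAt)

lemma omegaK_mono (α T : ℝ) (hα : 0 < α) (s₁ s₂ : ℝ) (h12 : s₁ ≤ s₂) (h2 : s₂ < T)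
    (hα1 : α < 1) :
    omegaK (1 - α) (T - s₁) ≤ omegaK (1 - α) (T - s₂) := by
  unfold omegaK
  have hΓ : 0 < Real.Gamma (1 - α) := Real.Gamma_pos_of_pos (by linarith)
  have h := Real.rpow_le_rpow_of_nonpos (show (0:ℝ) < T - s₂ by linarith)
    (show T - s₂ ≤ T - s₁ by linarith) (show (1:ℝ) - α - 1 ≤ 0 by linarith)
  exact div_le_div_of_nonneg_right h hΓ.le

lemma omegaK_pos (α T s : ℝ) (hα : 0 < α) (hα1 : α < 1) (hs : s < T) :
    0 < omegaK (1 - α) (T - s) := by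
  unfold omegaK
  have hΓ : 0 < Real.Gamma (1 - α) := Real.Gamma_pos_of_pos (by linarith)
  have : 0 < (T - s) ^ ((1:ℝ) - α - 1) := Real.rpow_pos_of_pos (by linarith) _
  positivity

lemma etaI_nonneg (α : ℝ) (hα : 0 < α) (hα1 : α < 1) (t : ℕ → ℝ) (n k : ℕ)
    (hab : t (k-1) < t k) (hkn : t k < t n) : 0 ≤ etaI α t n k := by
  set a := t (k-1) with ha
  set b := t k with hb
  set T := t n with hT
  set m : ℝ := (b + a)/2 with hm
  have hτ : 0 < b - a := by linarith
  set f : ℝ → ℝ := fun s => omegaK (1 - α) (T - s) with hf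
  have hfc : ContinuousOn f (Set.Icc a b) := omegaK_continuousOn α T a b hkn
  have huIcc : Set.uIcc a b = Set.Icc a b := Set.uIcc_of_le hab.le
  have hg_int : IntervalIntegrable (fun s => ((s - m) / (b - a)) * f s) MeasureTheory.volume a b := by
    apply ContinuousOn.intervalIntegrable
    rw [huIcc]
    exact (((continuous_id.sub continuous_const).div_const _).continuousOn).mul hfc
  have hh_int : IntervalIntegrable (fun s => ((s - m) / (b - a)) * f m) MeasureTheory.volume a b := by
    apply ContinuousOn.intervalIntegrable
    exact (((continuous_id.sub continuous_const).div_const _).mul continuous_const).continuousOn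
  have hmem : m ∈ Set.Icc a b := by constructor <;> simp only [hm] <;> linarith
  have hmono : ∀ x ∈ Set.Icc a b, ((x - m) / (b - a)) * f m ≤ ((x - m) / (b - a)) * f x := by
    intro x hx
    rcases le_total m x with h | h
    · have : f m ≤ f x := omegaK_mono α T hα m x h (by linarith [hx.2]) hα1
      exact mul_le_mul_of_nonneg_left this (div_nonneg (by linarith) hτ.le)
    · have : f x ≤ f m := omegaK_mono α T hα x m h (by linarith [hmem.2]) hα1
      have hnp : (x - m) / (b - a) ≤ 0 :=
        div_nonpos_of_nonpos_of_nonneg (by linarith) hτ.le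
      exact mul_le_mul_of_nonpos_left this hnp
  have hzero : (∫ s in a..b, ((s - m) / (b - a)) * f m) = 0 := by
    have h1 : (fun s : ℝ => ((s - m) / (b - a)) * f m)
        = fun s : ℝ => (f m / (b - a)) * s - (f m / (b - a)) * m := by
      funext s; ring
    rw [h1, intervalIntegral.integral_sub (intervalIntegral.intervalIntegrable_id.const_mul _)
      (intervalIntegrable_const), intervalIntegral.integral_const_mul,
      _root_.integral_id, intervalIntegral.integral_const]
    simp only [hm, smul_eq_mul]
    ring
  have hInt : 0 ≤ ∫ s in a..b, ((s - m) / (b - a)) * f s := by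
    rw [← hzero]
    exact intervalIntegral.integral_mono_on hab.le hh_int hg_int hmono
  unfold etaI
  rw [← ha, ← hb, ← hT]
  have h2 : (0:ℝ) ≤ 2 / (b - a) := by positivity
  exact mul_nonneg h2 (by simpa [hm, add_comm] using hInt)

lemma t_lt_of_lt (n : ℕ) (t : ℕ → ℝ) (hmono : ∀ j, j ≤ n → t j < t (j+1)) :
    ∀ i j, i < j → j ≤ n+1 → t i < t j := by
  intro i j hij hjn
  induction j with
  | zero => omega
  | succ j ih =>
    rcases Nat.lt_succ_iff_lt_or_eq.mp hij with h | h
    · exact (ih h (by omega)).trans (hmono j (by omega))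
    · subst h; exact hmono i (by omega)

/-- A_{n−k}^{(n)} ≥ a_{n−k}^{(n)} − η_{n−k}^{(n)}/(1+r_{k+1})
= ∫ ((t_{k+1}+t_k−2s)/((1+r_{k+1})τ_k²)) ω_{1−α}(t_n−s) ds > 0 for 1 ≤ k ≤ n−1. -/
theorem stmt_19 (n : ℕ) (hn : 2 ≤ n) (t : ℕ → ℝ) (ht0 : t 0 = 0)
    (hmono : ∀ j, j ≤ n → t j < t (j+1))
    (α : ℝ) (hα : α ∈ Set.Ioo (0:ℝ) 1)
    (k : ℕ) (hk1 : 1 ≤ k) (hkn : k ≤ n - 1) :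
    Aker α t n k ≥ aF α t n k - etaI α t n k / (1 + ratio t (k+1)) ∧
    aF α t n k - etaI α t n k / (1 + ratio t (k+1))
      = ∫ s in (t (k-1))..(t k),
          ((t (k+1) + t k - 2*s) / ((1 + ratio t (k+1)) * (t k - t (k-1))^2))
            * omegaK (1 - α) (t n - s) ∧
    0 < aF α t n k - etaI α t n k / (1 + ratio t (k+1)) := by
  obtain ⟨hα0, hα1⟩ := hα
  have tlt := t_lt_of_lt n t hmono
  have hab : t (k-1) < t k := tlt (k-1) k (by omega) (by omega)
  have hbc : t k < t (k+1) := tlt k (k+1) (by omega) (by omega)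
  have hbT : t k < t n := tlt k n (by omega) (by omega)
  have hcT : t (k+1) ≤ t n := by
    rcases eq_or_lt_of_le (show k+1 ≤ n by omega) with h | h
    · rw [h]
    · exact (tlt (k+1) n h (by omega)).le
  set a := t (k-1) with ha
  set b := t k with hb
  set c := t (k+1) with hc
  set T := t n with hT
  set f : ℝ → ℝ := fun s => omegaK (1 - α) (T - s) with hf
  have hτ : 0 < b - a := by linarith
  have hca : 0 < c - a := by linarith
  have hr : ratio t (k+1) = (c - b)/(b - a) := by
    have e1 : k+1-1 = k := by omega
    have e2 : k+1-2 = k-1 := by omega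
    unfold ratio
    rw [e1, e2, ← ha, ← hb, ← hc]
  set R := 1 + ratio t (k+1) with hRdef
  have hRpos : 0 < R := by
    rw [hRdef, hr]
    have := div_pos (show (0:ℝ) < c - b by linarith) hτ
    linarith
  have hRτ : R * (b - a) = c - a := by
    rw [hRdef, hr]
    field_simp
    ring
  -- integrability facts
  have hfc : ContinuousOn f (Set.Icc a b) := omegaK_continuousOn α T a b hbT
  have huIcc : Set.uIcc a b = Set.Icc a b := Set.uIcc_of_le hab.le
  have hint_f : IntervalIntegrable f MeasureTheory.volume a b :=
    (huIcc ▸ hfc).intervalIntegrable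
  have hint_sf : IntervalIntegrable (fun s => (s - (b+a)/2) * f s) MeasureTheory.volume a b := by
    apply ContinuousOn.intervalIntegrable
    rw [huIcc]
    exact ((continuous_id.sub continuous_const).continuousOn).mul hfc
  -- the equality (part 2)
  have hpull : (∫ s in a..b, ((s - (b + a)/2) / (b - a)) * f s)
      = (1/(b-a)) * ∫ s in a..b, (s - (b+a)/2) * f s := by
    rw [← intervalIntegral.integral_const_mul]
    apply intervalIntegral.integral_congr
    intro s _
    ring
  have hcoef : ∀ s : ℝ, ((c + b - 2*s) / (R * (b - a)^2)) * f s
      = (1/(b-a)) * f s - (2/(R*(b-a)^2)) * ((s - (b+a)/2) * f s) := by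
    intro s
    have h1 : R * (b - a)^2 = (c - a) * (b - a) := by
      rw [pow_two, ← mul_assoc, hRτ]
    rw [h1]
    have hne1 : c - a ≠ 0 := ne_of_gt hca
    have hne2 : b - a ≠ 0 := ne_of_gt hτ
    field_simp
    ring
  have hI : (∫ s in a..b, ((c + b - 2*s) / (R * (b - a)^2)) * f s)
      = (1/(b-a)) * (∫ s in a..b, f s)
        - (2/(R*(b-a)^2)) * ∫ s in a..b, (s - (b+a)/2) * f s := by
    simp_rw [hcoef]
    rw [intervalIntegral.integral_sub (hint_f.const_mul _) (hint_sf.const_mul _),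
      intervalIntegral.integral_const_mul, intervalIntegral.integral_const_mul]
  have heq : aF α t n k - etaI α t n k / R
      = ∫ s in a..b, ((c + b - 2*s) / (R * (b - a)^2)) * f s := by
    rw [hI]
    unfold aF etaI
    rw [← ha, ← hb, ← hT, ← hf, hpull]
    have hne2 : b - a ≠ 0 := ne_of_gt hτ
    have hRne : R ≠ 0 := ne_of_gt hRpos
    field_simp
  refine ⟨?_, heq, ?_⟩
  · -- part 1
    unfold Aker
    rw [← hRdef]
    by_cases hk : k = 1
    · simp [hk]
    · simp only [if_neg hk]
      have hab' : t (k-1-1) < t (k-1) := tlt (k-1-1) (k-1) (by omega) (by omega)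
      have hbT' : t (k-1) < t n := tlt (k-1) n (by omega) (by omega)
      have hη : 0 ≤ etaI α t n (k-1) := etaI_nonneg α hα0 hα1 t n (k-1) hab' hbT'
      have hrk : 0 < ratio t k := by
        unfold ratio
        have h1 : t (k-1) - t (k-2) > 0 := by
          have : t (k-2) < t (k-1) := tlt (k-2) (k-1) (by omega) (by omega)
          linarith
        have h2 : t k - t (k-1) > 0 := by linarith
        positivity
      have : 0 ≤ etaI α t n (k-1) / (ratio t k * (1 + ratio t k)) := by
        apply div_nonneg hη
        nlinarith
      linarith
  · -- part 3
    rw [heq]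
    apply intervalIntegral.intervalIntegral_pos_of_pos_on
    · apply ContinuousOn.intervalIntegrable
      rw [huIcc]
      exact (((continuous_const.sub (continuous_const.mul continuous_id)).div_const
        _).continuousOn).mul hfc
    · intro x hx
      have h1 : 0 < c + b - 2*x := by
        have := hx.2; simp only [Set.mem_Ioo] at hx; nlinarith [hx.2]
      have h2 : 0 < f x := omegaK_pos α T x hα0 hα1 (by have := hx.2; linarith)
      have h3 : 0 < R * (b - a)^2 := by positivity
      positivity
    · exact hab
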